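/- (Lemma 2, penalized case.) For m < n, if the changepoint vector τ is not optimal at any z for the length-m subproblem, i.e., L_m(z, τ) > L^opt_m(z) for all z ∈ R, then for all z ∈ R the penalized loss satisfies L^opt_n(z) < L_m(z, τ) + C(x(z)_{m+1:n}) + β; hence concat(τ, m) is never an optimizer of the penalized loss L_n(z, ·) for any z. -/

import Mathlib

/-!
Appending the changepoint `m` splits the penalized loss:
`L_n(concat(τ, m)) = L_m(τ) + C(x_{m+1:n}) + β`. Hence any `τ'` beating `τ` on the length-`m`
problem gives `concat(τ', m)`, which beats `concat(τ, m)` on the length-`n` problem. The only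
obstruction, `m = 0` (where `m` is not an admissible changepoint), cannot occur: there the empty
vector is the only valid one, so nothing beats it.
-/

/-- Segment mean of entries `s` through `e` of the sequence `x`. -/
noncomputable def segMean (x : ℕ → ℝ) (s e : ℕ) : ℝ :=
  (∑ i ∈ Finset.Icc s e, x i) / ((e - s + 1 : ℕ) : ℝ)

/-- Segment cost `C(x_{s:e}) = ∑_{i=s}^e (x_i - x̄_{s:e})²`. -/
noncomputable def segCost (x : ℕ → ℝ) (s e : ℕ) : ℝ :=
  ∑ i ∈ Finset.Icc s e, (x i - segMean x s e) ^ 2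

/-- The parametrized sequence `x(z) = a + b z`. -/
def paramSeq (a b : ℕ → ℝ) (z : ℝ) : ℕ → ℝ := fun i => a i + b i * z

/-- The segment boundaries `0 = τ₀ < τ₁ < ... < τ_k < τ_{k+1} = n` associated with a
changepoint vector `τ = (τ₁, ..., τ_k)`. -/
def bounds (n : ℕ) {k : ℕ} (τ : Fin k → ℕ) : Fin (k + 2) → ℕ :=
  Fin.snoc (Fin.cons 0 τ) n

/-- `τ` is a valid `k`-dimensional changepoint vector for a length-`n` sequence:
strictly increasing with `1 ≤ τ_i ≤ n - 1`. -/
def validCP (n : ℕ) {k : ℕ} (τ : Fin k → ℕ) : Prop :=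
  StrictMono τ ∧ ∀ i, 1 ≤ τ i ∧ τ i < n

/-- The segmentation loss `L_{k,n}(x, τ) = ∑_{κ=1}^{k+1} C(x_{τ_{κ-1}+1 : τ_κ})`. -/
noncomputable def cpLoss (x : ℕ → ℝ) (n : ℕ) {k : ℕ} (τ : Fin k → ℕ) : ℝ :=
  ∑ κ : Fin (k + 1), segCost x (bounds n τ κ.castSucc + 1) (bounds n τ κ.succ)

/-- The optimal loss `L^opt_{k,n}(x) = min_{τ ∈ T_{k,n}} L_{k,n}(x, τ)`. -/
noncomputable def optLoss (x : ℕ → ℝ) (k n : ℕ) : ℝ :=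
  sInf {r : ℝ | ∃ τ : Fin k → ℕ, validCP n τ ∧ r = cpLoss x n τ}

/-- The penalized loss `L_n(x, τ) = ∑_κ C(x_{τ_{κ-1}+1:τ_κ}) + β·dim(τ)`. -/
noncomputable def penLoss (x : ℕ → ℝ) (β : ℝ) (n : ℕ) {k : ℕ} (τ : Fin k → ℕ) : ℝ :=
  cpLoss x n τ + β * k

/-- The penalized optimal loss `L^opt_n(x) = min_{τ ∈ T_n} L_n(x, τ)` over
changepoint vectors of any dimension. -/
noncomputable def optPenLoss (x : ℕ → ℝ) (β : ℝ) (n : ℕ) : ℝ :=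
  sInf {r : ℝ | ∃ (k : ℕ) (τ : Fin k → ℕ), validCP n τ ∧ r = penLoss x β n τ}


lemma StrictMono.snoc {α : Type*} [Preorder α] {n : ℕ} {f : Fin n → α} {a : α}
    (hf : StrictMono f) (ha : ∀ i, f i < a) : StrictMono (Fin.snoc f a : Fin (n + 1) → α) := by
  intro i j hij
  induction j using Fin.lastCases with
  | last =>
    obtain ⟨i, rfl⟩ := Fin.exists_castSucc_eq.2 hij.ne
    simpa using ha i
  | cast j =>
    obtain ⟨i, rfl⟩ := Fin.exists_castSucc_eq.2 (hij.trans (Fin.castSucc_lt_last j)).ne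
    simpa using hf (Fin.castSucc_lt_castSucc_iff.1 hij)

section Snoc

variable (x : ℕ → ℝ) (m n : ℕ) {k : ℕ} (τ : Fin k → ℕ)

lemma bounds_snoc_castSucc (j : Fin (k + 2)) :
    bounds n (Fin.snoc τ m) j.castSucc = bounds m τ j := by
  rw [bounds, Fin.snoc_castSucc, Fin.cons_snoc_eq_snoc_cons, bounds]

lemma cpLoss_snoc : cpLoss x n (Fin.snoc τ m) = cpLoss x m τ + segCost x (m + 1) n := by
  rw [cpLoss, Fin.sum_univ_castSucc]
  simp only [Fin.succ_castSucc, Fin.succ_last, bounds_snoc_castSucc]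
  simp only [cpLoss, bounds, Fin.snoc_last]

lemma penLoss_snoc (β : ℝ) :
    penLoss x β n (Fin.snoc τ m) = penLoss x β m τ + segCost x (m + 1) n + β := by
  rw [penLoss, penLoss, cpLoss_snoc]
  push_cast
  ring

end Snoc

namespace validCP

variable {m n k : ℕ} {τ : Fin k → ℕ}

lemma elim0 (n : ℕ) : validCP n (Fin.elim0 : Fin 0 → ℕ) :=
  ⟨fun i => i.elim0, fun i => i.elim0⟩

lemma dim_eq_zero (hτ : validCP 0 τ) : k = 0 :=
  Nat.eq_zero_of_not_pos fun hk => Nat.not_lt_zero _ (hτ.2 ⟨0, hk⟩).2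

lemma snoc (hτ : validCP m τ) (hm : 1 ≤ m) (hmn : m < n) : validCP n (Fin.snoc τ m) := by
  refine ⟨hτ.1.snoc fun i => (hτ.2 i).2, fun i => ?_⟩
  induction i using Fin.lastCases with
  | last => simpa using ⟨hm, hmn⟩
  | cast i => simpa using ⟨(hτ.2 i).1, (hτ.2 i).2.trans hmn⟩

end validCP

section OptPenLoss

variable {x : ℕ → ℝ} {β : ℝ} {m n k : ℕ} {τ : Fin k → ℕ}

lemma penLoss_nonneg (hβ : 0 ≤ β) : 0 ≤ penLoss x β n τ :=
  add_nonneg (Finset.sum_nonneg fun _ _ => Finset.sum_nonneg fun _ _ => sq_nonneg _)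
    (mul_nonneg hβ k.cast_nonneg)

lemma optPenLoss_le_penLoss (hβ : 0 ≤ β) (hτ : validCP n τ) :
    optPenLoss x β n ≤ penLoss x β n τ :=
  csInf_le ⟨0, by rintro r ⟨k, τ, -, rfl⟩; exact penLoss_nonneg hβ⟩ ⟨k, τ, hτ, rfl⟩

lemma exists_penLoss_lt_of_optPenLoss_lt {r : ℝ} (h : optPenLoss x β n < r) :
    ∃ (k : ℕ) (τ : Fin k → ℕ), validCP n τ ∧ penLoss x β n τ < r := by
  obtain ⟨_, ⟨k, τ, hτ, rfl⟩, hlt⟩ :=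
    exists_lt_of_csInf_lt (by exact ⟨_, 0, Fin.elim0, validCP.elim0 n, rfl⟩) h
  exact ⟨k, τ, hτ, hlt⟩

theorem optPenLoss_lt_penLoss_add_segCost (hβ : 0 ≤ β) (hmn : m < n) (hτ : validCP m τ)
    (hsub : optPenLoss x β m < penLoss x β m τ) :
    optPenLoss x β n < penLoss x β m τ + segCost x (m + 1) n + β := by
  obtain ⟨k', τ', hτ', hlt⟩ := exists_penLoss_lt_of_optPenLoss_lt hsub
  have hm : 1 ≤ m := by
    refine Nat.one_le_iff_ne_zero.2 fun hm => ?_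
    subst hm
    obtain rfl := hτ.dim_eq_zero
    obtain rfl := hτ'.dim_eq_zero
    exact hlt.ne (congrArg _ (Subsingleton.elim τ' τ))
  calc optPenLoss x β n ≤ penLoss x β n (Fin.snoc τ' m) :=
        optPenLoss_le_penLoss hβ (hτ'.snoc hm hmn)
    _ = penLoss x β m τ' + segCost x (m + 1) n + β := penLoss_snoc x m n τ' β
    _ < penLoss x β m τ + segCost x (m + 1) n + β := by gcongr

end OptPenLoss

/-- Lemma 2 (penalized case): for `m < n`, if `τ` is strictly suboptimal for the
length-`m` subproblem at every `z`, then for all `z` the penalized optimal loss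
satisfies `L^opt_n(z) < L_m(z, τ) + C(x(z)_{m+1:n}) + β`; hence `concat(τ, m)` is
never an optimizer of the penalized loss `L_n(z, ·)` for any `z`. -/
theorem pen_prune_concat (a b : ℕ → ℝ) (β : ℝ) (hβ : 0 < β) (k m n : ℕ)
    (τ : Fin k → ℕ) (hmn : m < n) (hτ : validCP m τ)
    (hsub : ∀ z : ℝ,
      optPenLoss (paramSeq a b z) β m < penLoss (paramSeq a b z) β m τ) :
    (∀ z : ℝ,
      optPenLoss (paramSeq a b z) β n <
        penLoss (paramSeq a b z) β m τ + segCost (paramSeq a b z) (m + 1) n + β) ∧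
    (∀ z : ℝ,
      optPenLoss (paramSeq a b z) β n <
        penLoss (paramSeq a b z) β n (Fin.snoc τ m)) := by
  have hprune := fun z => optPenLoss_lt_penLoss_add_segCost hβ.le hmn hτ (hsub z)
  exact ⟨hprune, fun z => penLoss_snoc (paramSeq a b z) m n τ β ▸ hprune z⟩
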